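/- Let n ≥ 4 and let R ≅ F₁ × ⋯ × Fₙ be a direct product of n fields. Then the metric dimension of the prime ideal sum graph PIS(R) equals n. -/

import Mathlib

open scoped Classical

/-- The vertex set of the prime ideal sum graph: nonzero proper ideals of `R`. -/
abbrev PISVertex (R : Type*) [CommRing R] := {I : Ideal R // I ≠ ⊥ ∧ I ≠ ⊤}

/-- The prime ideal sum graph of a commutative ring `R`: vertices are nonzero proper
ideals, and two distinct vertices `I`, `J` are adjacent iff `I + J` is a prime ideal. -/
def PIS (R : Type*) [CommRing R] : SimpleGraph (PISVertex R) where
  Adj I J := I ≠ J ∧ (I.1 + J.1).IsPrime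
  symm := ⟨fun I J h => ⟨h.1.symm, by rw [add_comm]; exact h.2⟩⟩
  loopless := ⟨fun I h => h.1 rfl⟩

/-- A set `S` of vertices is a resolving set if any two distinct vertices not both in `S`
are distinguished by the distance to some vertex of `S`. -/
def IsResolvingSet {V : Type*} (G : SimpleGraph V) (S : Set V) : Prop :=
  ∀ u v : V, u ≠ v → ¬(u ∈ S ∧ v ∈ S) → ∃ w ∈ S, G.dist u w ≠ G.dist v w

/-- The metric dimension of a graph: the least cardinality of a resolving set. -/
noncomputable def metricDim {V : Type*} (G : SimpleGraph V) : ℕ∞ :=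
  ⨅ S : {S : Set V // IsResolvingSet G S}, (S : Set V).encard

/-!
An ideal of `F₁ × ⋯ × Fₙ` is determined by the set of coordinates at which it is the whole
field, so the ideal lattice of `R` is the power set lattice of `Fin n`. Prime ideals of `R` are
maximal, hence `I` and `J` are adjacent exactly when the union of their sets is a coatom `{j}ᶜ`.
For `n ≥ 3` this graph has diameter two, and the distance from `s` to `{j}ᶜ` is `2` precisely
when `j ∈ s`; so the `n` coatoms form a resolving set. Conversely, in a graph of diameter two a
resolving set `S` separates the vertices outside it by their neighbourhoods in `S`, whence
`2 ^ n - 2 ≤ #S + 2 ^ #S`, which forces `#S ≥ n` once `n ≥ 4`.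
-/

namespace SimpleGraph

variable {V W : Type*} {G : SimpleGraph V} {H : SimpleGraph W}

lemma Hom.edist_le (f : G →g H) (u v : V) : H.edist (f u) (f v) ≤ G.edist u v :=
  le_iInf fun p => (SimpleGraph.edist_le (p.map f)).trans_eq (by rw [Walk.length_map])

lemma Iso.edist_eq (φ : G ≃g H) (u v : V) : H.edist (φ u) (φ v) = G.edist u v := by
  refine le_antisymm (φ.toHom.edist_le u v) ?_
  simpa using φ.symm.toHom.edist_le (φ u) (φ v)

lemma Iso.dist_eq (φ : G ≃g H) (u v : V) : H.dist (φ u) (φ v) = G.dist u v := by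
  rw [dist, dist, φ.edist_eq]

lemma dist_eq_ite_of_ediam_le_two (hG : G.ediam ≤ 2) {u v : V} (huv : u ≠ v) :
    G.dist u v = if G.Adj u v then 1 else 2 := by
  split_ifs with hadj
  · exact dist_eq_one_iff_adj.2 hadj
  have hle : G.edist u v ≤ 2 := edist_le_ediam.trans hG
  have h0 : G.edist u v ≠ 0 := edist_eq_zero_iff.not.2 huv
  have h1 : G.edist u v ≠ 1 := edist_eq_one_iff_adj.not.2 hadj
  have htop : G.edist u v ≠ ⊤ := ne_top_of_le_ne_top (by decide) hle
  rw [dist]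
  lift G.edist u v to ℕ using htop with k
  norm_cast at hle h0 h1
  rw [ENat.toNat_natCast]
  omega

end SimpleGraph

open SimpleGraph

section MetricDim

variable {V W : Type*} {G : SimpleGraph V} {H : SimpleGraph W}

lemma metricDim_le_encard {S : Set V} (hS : IsResolvingSet G S) : metricDim G ≤ S.encard :=
  iInf_le_of_le ⟨S, hS⟩ le_rfl

lemma le_metricDim_iff {k : ℕ∞} :
    k ≤ metricDim G ↔ ∀ S, IsResolvingSet G S → k ≤ S.encard := by
  simp [metricDim, le_iInf_iff]

lemma IsResolvingSet.image (φ : G ≃g H) {S : Set V} (hS : IsResolvingSet G S) :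
    IsResolvingSet H (φ '' S) := by
  intro u v huv hboth
  obtain ⟨w, hw, hd⟩ := hS (φ.symm u) (φ.symm v) (by simpa using huv)
    fun h => hboth ⟨⟨_, h.1, by simp⟩, ⟨_, h.2, by simp⟩⟩
  exact ⟨φ w, Set.mem_image_of_mem φ hw, by simpa [← φ.dist_eq] using hd⟩

lemma metricDim_le_of_iso (φ : G ≃g H) : metricDim H ≤ metricDim G :=
  le_metricDim_iff.2 fun S hS =>
    (metricDim_le_encard (hS.image φ)).trans_eq (φ.injective.encard_image S)

lemma SimpleGraph.Iso.metricDim_eq (φ : G ≃g H) : metricDim G = metricDim H :=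
  le_antisymm (metricDim_le_of_iso φ.symm) (metricDim_le_of_iso φ)

/-- In a graph of diameter at most two, the vertices outside a resolving set `S` are told apart
by their neighbourhoods in `S`, so there are at most `2 ^ #S` of them. -/
lemma card_le_ncard_add_two_pow_of_ediam_le_two [Finite V] (hG : G.ediam ≤ 2) {S : Set V}
    (hS : IsResolvingSet G S) : Nat.card V ≤ S.ncard + 2 ^ S.ncard := by
  let trace : ↥Sᶜ → Set S := fun u => {w | G.Adj u w}
  have htrace : Function.Injective trace := by
    rintro ⟨u, hu⟩ ⟨v, hv⟩ huv
    by_contra hne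
    obtain ⟨w, hwS, hd⟩ := hS u v (fun h => hne (Subtype.ext h)) (fun h => hu h.1)
    have hadj : G.Adj u w ↔ G.Adj v w := Set.ext_iff.1 huv ⟨w, hwS⟩
    have huw : u ≠ w := fun h => hu (h ▸ hwS)
    have hvw : v ≠ w := fun h => hv (h ▸ hwS)
    rw [dist_eq_ite_of_ediam_le_two hG huw, dist_eq_ite_of_ediam_le_two hG hvw, hadj] at hd
    exact hd rfl
  have hcompl : Sᶜ.ncard ≤ 2 ^ S.ncard := by
    have := Fintype.ofFinite V
    have := Nat.card_le_card_of_injective trace htrace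
    rwa [Nat.card_eq_fintype_card (α := Set S), Fintype.card_set, ← Nat.card_eq_fintype_card,
      Nat.card_coe_set_eq, Nat.card_coe_set_eq] at this
  rw [← Set.ncard_add_ncard_compl S]
  omega

end MetricDim

def coatomSupGraph (L : Type*) [Lattice L] [BoundedOrder L] :
    SimpleGraph {a : L // a ≠ ⊥ ∧ a ≠ ⊤} where
  Adj a b := a ≠ b ∧ IsCoatom (a.1 ⊔ b.1)
  symm := ⟨fun a b h => ⟨h.1.symm, by rw [sup_comm]; exact h.2⟩⟩
  loopless := ⟨fun a h => h.1 rfl⟩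

def OrderIso.coatomSupGraphIso {L L' : Type*} [Lattice L] [BoundedOrder L] [Lattice L']
    [BoundedOrder L'] (f : L ≃o L') : coatomSupGraph L ≃g coatomSupGraph L' where
  toEquiv := f.toEquiv.subtypeEquiv fun a => by simp
  map_rel_iff' {a b} := by
    simp only [coatomSupGraph, Equiv.subtypeEquiv_apply, ne_eq,
      OrderIso.coe_toEquiv, ← map_sup, f.isCoatom_iff, f.injective.eq_iff, Subtype.ext_iff]

lemma PIS_eq_coatomSupGraph (R : Type*) [CommRing R] [Ring.KrullDimLE 0 R] :
    PIS R = coatomSupGraph (Ideal R) := by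
  ext u v
  simp only [PIS, coatomSupGraph, Submodule.add_eq_sup, ← Ideal.isMaximal_iff_isPrime,
    Ideal.isMaximal_def]

noncomputable def IsSimpleOrder.piOrderIsoSet {ι : Type*} (α : ι → Type*) [∀ i, Lattice (α i)]
    [∀ i, BoundedOrder (α i)] [∀ i, IsSimpleOrder (α i)] : (∀ i, α i) ≃o Set ι where
  toFun a := {i | a i = ⊤}
  invFun s i := if i ∈ s then ⊤ else ⊥
  left_inv a := by
    ext i
    rcases eq_bot_or_eq_top (a i) with h | h <;> simp [h]
  right_inv s := by
    ext i
    by_cases h : i ∈ s <;> simp [h]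
  map_rel_iff' {a b} := by
    simp only [Equiv.coe_fn_mk, Set.ofPred_subset_ofPred, Pi.le_def]
    refine forall_congr' fun i => ?_
    rcases eq_bot_or_eq_top (a i) with ha | ha <;>
      rcases eq_bot_or_eq_top (b i) with hb | hb <;> simp [ha, hb]

noncomputable def Ideal.piFieldOrderIsoSet {ι : Type*} [Finite ι] (F : ι → Type*)
    [∀ i, Field (F i)] : Ideal (∀ i, F i) ≃o Set ι :=
  Ideal.piOrderIso.trans (IsSimpleOrder.piOrderIsoSet fun i => Ideal (F i))

section SetGraph

variable {α : Type*}

local notation "𝒢" α => coatomSupGraph (Set α)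

lemma coatomSupGraph_set_adj_iff {s t : {s : Set α // s ≠ ⊥ ∧ s ≠ ⊤}} :
    (𝒢 α).Adj s t ↔ s ≠ t ∧ ∃ j, s.1 ∪ t.1 = {j}ᶜ := by
  simp [coatomSupGraph, Set.isCoatom_iff]

lemma exists_ne_ne_of_two_lt_card [Fintype α] (h : 2 < Fintype.card α) (i j : α) :
    ∃ k, k ≠ i ∧ k ≠ j := by
  by_contra! hij
  have : Finset.univ ⊆ ({i, j} : Finset α) := fun k _ => by
    by_cases hk : k = i
    · simp [hk]
    · simp [hij k hk]
  have := (Finset.card_le_card this).trans Finset.card_le_two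
  simp only [Finset.card_univ] at this
  omega

def cosingletonVertex [Nontrivial α] (j : α) : {s : Set α // s ≠ ⊥ ∧ s ≠ ⊤} :=
  ⟨{j}ᶜ, by simp, by simp⟩

lemma coatomSupGraph_set_adj_of_compl_pair {u w : {s : Set α // s ≠ ⊥ ∧ s ≠ ⊤}} {i j : α}
    (hi : i ∉ u.1) (hj : j ∈ u.1) (hw : w.1 = {i, j}ᶜ) : (𝒢 α).Adj u w := by
  refine coatomSupGraph_set_adj_iff.2 ⟨fun huw => by subst huw; simp [hw] at hj, i, ?_⟩
  ext x
  by_cases hxi : x = i <;> by_cases hxj : x = j <;> simp_all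

/-- A common neighbour of non-adjacent `u ≠ v`: the coatom `{i}ᶜ` for some `i ∉ u ∪ v`, or, if
`u ∪ v` is everything, `{i, j}ᶜ` for `i ∉ u` and `j ∉ v`. -/
lemma exists_adj_adj_coatomSupGraph_set [Fintype α] (h : 2 < Fintype.card α)
    {u v : {s : Set α // s ≠ ⊥ ∧ s ≠ ⊤}} (huv : u ≠ v) (hadj : ¬(𝒢 α).Adj u v) :
    ∃ w, (𝒢 α).Adj u w ∧ (𝒢 α).Adj w v := by
  have : Nontrivial α := Fintype.one_lt_card_iff_nontrivial.1 (by omega)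
  by_cases hcover : u.1 ∪ v.1 = Set.univ
  · obtain ⟨i, hi⟩ := (Set.ne_univ_iff_exists_notMem _).1 u.2.2
    obtain ⟨j, hj⟩ := (Set.ne_univ_iff_exists_notMem _).1 v.2.2
    have hiv : i ∈ v.1 := ((Set.eq_univ_iff_forall.1 hcover) i).resolve_left hi
    have hju : j ∈ u.1 := ((Set.eq_univ_iff_forall.1 hcover) j).resolve_right hj
    obtain ⟨k, hki, hkj⟩ := exists_ne_ne_of_two_lt_card h i j
    let w : {s : Set α // s ≠ ⊥ ∧ s ≠ ⊤} :=
      ⟨{i, j}ᶜ, Set.nonempty_iff_ne_empty.1 ⟨k, by simp [hki, hkj]⟩,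
        Set.ne_univ_iff_exists_notMem _ |>.2 ⟨i, by simp⟩⟩
    refine ⟨w, coatomSupGraph_set_adj_of_compl_pair hi hju rfl, Adj.symm ?_⟩
    exact coatomSupGraph_set_adj_of_compl_pair hj hiv (by rw [Set.pair_comm])
  · obtain ⟨i, hi⟩ := (Set.ne_univ_iff_exists_notMem _).1 hcover
    rw [Set.mem_union, not_or] at hi
    have hu : u.1 ⊆ {i}ᶜ := Set.subset_compl_singleton_iff.2 hi.1
    have hv : v.1 ⊆ {i}ᶜ := Set.subset_compl_singleton_iff.2 hi.2
    have hui : u ≠ cosingletonVertex i := fun h => hadj <|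
      coatomSupGraph_set_adj_iff.2 ⟨huv, i, by rw [h]; exact Set.union_eq_left.2 hv⟩
    have hvi : v ≠ cosingletonVertex i := fun h => hadj <|
      coatomSupGraph_set_adj_iff.2 ⟨huv, i, by rw [h]; exact Set.union_eq_right.2 hu⟩
    exact ⟨cosingletonVertex i, coatomSupGraph_set_adj_iff.2 ⟨hui, i, Set.union_eq_right.2 hu⟩,
      coatomSupGraph_set_adj_iff.2 ⟨hvi.symm, i, Set.union_eq_left.2 hv⟩⟩

lemma ediam_coatomSupGraph_set_le_two [Fintype α] (h : 2 < Fintype.card α) :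
    (𝒢 α).ediam ≤ 2 := by
  refine ediam_le_iff.2 fun u v => ?_
  by_cases huv : u = v
  · simp [huv]
  by_cases hadj : (𝒢 α).Adj u v
  · simp [edist_eq_one_iff_adj.2 hadj]
  obtain ⟨w, huw, hwv⟩ := exists_adj_adj_coatomSupGraph_set h huv hadj
  exact (edist_eq_two_iff.2 ⟨huv, hadj, w, (mem_commonNeighbors _).2 ⟨huw, hwv.symm⟩⟩).le

lemma dist_cosingletonVertex_eq_two_iff [Fintype α] [Nontrivial α] (h : 2 < Fintype.card α)
    (s : {s : Set α // s ≠ ⊥ ∧ s ≠ ⊤}) (j : α) :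
    (𝒢 α).dist s (cosingletonVertex j) = 2 ↔ j ∈ s.1 := by
  by_cases hs : s = cosingletonVertex j
  · simp [hs, cosingletonVertex]
  rw [dist_eq_ite_of_ediam_le_two (ediam_coatomSupGraph_set_le_two h) hs]
  by_cases hj : j ∈ s.1
  · have hnadj : ¬(𝒢 α).Adj s (cosingletonVertex j) := by
      rintro ⟨-, hco⟩
      refine hco.1 (Set.eq_univ_of_forall fun x => ?_)
      by_cases hx : x = j <;> simp [hx, hj, cosingletonVertex]
    simp [hnadj, hj]
  · have hadj : (𝒢 α).Adj s (cosingletonVertex j) := coatomSupGraph_set_adj_iff.2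
      ⟨hs, j, Set.union_eq_right.2 (Set.subset_compl_singleton_iff.2 hj)⟩
    simp [hadj, hj]

lemma isResolvingSet_range_cosingletonVertex [Fintype α] [Nontrivial α]
    (h : 2 < Fintype.card α) : IsResolvingSet (𝒢 α) (Set.range cosingletonVertex) := by
  intro u v huv _
  obtain ⟨j, hj⟩ : ∃ j, ¬(j ∈ u.1 ↔ j ∈ v.1) := by
    by_contra! H
    exact huv (Subtype.ext (Set.ext H))
  refine ⟨cosingletonVertex j, Set.mem_range_self j, fun hd => hj ?_⟩
  rw [← dist_cosingletonVertex_eq_two_iff h, ← dist_cosingletonVertex_eq_two_iff h, hd]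

lemma cosingletonVertex_injective [Nontrivial α] :
    Function.Injective (cosingletonVertex : α → {s : Set α // s ≠ ⊥ ∧ s ≠ ⊤}) := by
  intro i j hij
  simpa [cosingletonVertex] using hij

lemma Set.natCard_ne_bot_and_ne_top [Fintype α] [Nonempty α] :
    Nat.card {s : Set α // s ≠ ⊥ ∧ s ≠ ⊤} = 2 ^ Fintype.card α - 2 := by
  classical
  have hfilter : Finset.univ.filter (fun s : Set α => s ≠ ⊥ ∧ s ≠ ⊤) = Finset.univ \ {⊥, ⊤} := by
    ext s
    simp [not_or]
  rw [Nat.card_eq_fintype_card, Fintype.card_subtype, hfilter, Finset.card_sdiff,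
    Finset.inter_univ, Finset.card_univ, Fintype.card_set, Finset.card_pair bot_ne_top]

lemma add_two_pow_lt_two_pow_sub_two {k n : ℕ} (hn : 4 ≤ n) (hk : k < n) :
    k + 2 ^ k < 2 ^ n - 2 := by
  obtain ⟨m, rfl⟩ : ∃ m, n = m + 4 := ⟨n - 4, by omega⟩
  have hpow : 2 ^ k ≤ 2 ^ (m + 3) := Nat.pow_le_pow_right two_pos (by omega)
  have hm : m < 2 ^ m := Nat.lt_two_pow_self
  rw [pow_add] at hpow ⊢
  omega

theorem metricDim_coatomSupGraph_set [Fintype α] (h : 4 ≤ Fintype.card α) :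
    metricDim (𝒢 α) = Fintype.card α := by
  have : Nontrivial α := Fintype.one_lt_card_iff_nontrivial.1 (by omega)
  have h2 : 2 < Fintype.card α := by omega
  refine le_antisymm ?_ (le_metricDim_iff.2 fun S hS => ?_)
  · calc metricDim (𝒢 α) ≤ (Set.range cosingletonVertex).encard :=
          metricDim_le_encard (isResolvingSet_range_cosingletonVertex h2)
      _ = Fintype.card α := by
          rw [← Set.image_univ, cosingletonVertex_injective.encard_image, Set.encard_univ,
            ENat.card_eq_coe_fintype_card]
  · have hcard := card_le_ncard_add_two_pow_of_ediam_le_two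
      (ediam_coatomSupGraph_set_le_two h2) hS
    rw [Set.natCard_ne_bot_and_ne_top] at hcard
    rw [← S.toFinite.cast_ncard_eq, Nat.cast_le]
    by_contra! hlt
    exact (add_two_pow_lt_two_pow_sub_two h hlt).not_ge hcard

end SetGraph

/-- If `R` is isomorphic to a direct product of `n ≥ 4` fields, then the metric dimension
of its prime ideal sum graph equals `n`. -/
theorem metricDim_PIS_n_fields {R : Type*} [CommRing R] {n : ℕ} (hn : 4 ≤ n)
    (F : Fin n → Type*) [∀ i, Field (F i)] (e : R ≃+* ∀ i, F i) :
    metricDim (PIS R) = n := by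
  have : IsArtinianRing R := e.symm.surjective.isArtinianRing
  let f : Ideal R ≃o Set (Fin n) :=
    e.symm.idealComapOrderIso.trans (Ideal.piFieldOrderIsoSet F)
  rw [PIS_eq_coatomSupGraph, f.coatomSupGraphIso.metricDim_eq,
    metricDim_coatomSupGraph_set (by simpa using hn), Fintype.card_fin]
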